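/- arXiv:1810.01816 — 6 statements merged into one kernel-verified Lean document; each statement's English description precedes it below -/
import Mathlib

section
/- Let D be a type with a binary relation ~ (the neighboring relation), let ε₁, ε₂, δ₁, δ₂ ≥ 0, and let M₁ : D → PMF A and M₂ : D → PMF B be mechanisms such that M₁ satisfies (ε₁,δ₁)-differential privacy and M₂ satisfies (ε₂,δ₂)-differential privacy with respect to ~. Then the mechanism that releases both outputs independently, J(d) = (M₁ d).bind (fun a => (M₂ d).map (Prod.mk a)), satisfies (ε₁+ε₂, δ₁+δ₂)-differential privacy: for all d₁ ~ d₂ and every set S ⊆ A × B, Pr[J(d₁) ∈ S] ≤ e^{ε₁+ε₂} · Pr[J(d₂) ∈ S] + δ₁ + δ₂. -/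
/-!
Condition on the first output `a`. Writing `pᵢ = M₁ dᵢ` and `qᵢ a` for the `M₂ dᵢ`-probability of
the slice `{b | (a, b) ∈ S}`, the second mechanism gives `q₁ a ≤ e^{ε₂} q₂ a + δ₂`. The set-wise
bound for `p₁, p₂` extends to expectations of `[0, 1]`-valued functions, because the excess mass
`∑ (p₁ a - e^{ε₁} p₂ a)⁺` is the excess on the single set `{p₁ > e^{ε₁} p₂}`, hence at most `δ₁`.
Applying this to the truncation `(q₁ a - δ₂)⁺` rather than to `q₁` keeps `δ₂` from being
multiplied by `e^{ε₁}`.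
-/

open ENNReal

namespace PMF

variable {α β : Type*}

/-- One direction of `(ε, δ)`-indistinguishability of two distributions, with `c = e^ε`. -/
def ApproxDominated (c δ : ℝ≥0∞) (p q : PMF α) : Prop :=
  ∀ s : Set α, p.toOuterMeasure s ≤ c * q.toOuterMeasure s + δ

theorem toOuterMeasure_le_one (p : PMF α) (s : Set α) : p.toOuterMeasure s ≤ 1 :=
  (MeasureTheory.measure_mono (Set.subset_univ s)).trans_eq
    ((p.toOuterMeasure_apply_eq_one_iff _).2 (Set.subset_univ _))

namespace ApproxDominated

variable {c δ : ℝ≥0∞} {p q : PMF α}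

theorem map (h : ApproxDominated c δ p q) (f : α → β) :
    ApproxDominated c δ (p.map f) (q.map f) := fun s => by
  simpa only [toOuterMeasure_map_apply] using h (f ⁻¹' s)

theorem tsum_tsub_le (h : ApproxDominated c δ p q) (hc : c ≠ ∞) :
    ∑' a, (p a - c * q a) ≤ δ := by
  set T := {a | c * q a < p a}
  have h_split : ∀ a, (p a - c * q a) + T.indicator (fun a => c * q a) a = T.indicator p a := by
    intro a
    by_cases ha : c * q a < p a
    · simp [Set.indicator_of_mem (show a ∈ T from ha), tsub_add_cancel_of_le ha.le]
    · simp [Set.indicator_of_notMem (show a ∉ T from ha), tsub_eq_zero_of_le (not_lt.mp ha)]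
  have h_mass : ∑' a, T.indicator (fun a => c * q a) a = c * q.toOuterMeasure T := by
    rw [toOuterMeasure_apply, ← ENNReal.tsum_mul_left]
    simp only [Set.indicator_apply, mul_ite, mul_zero]
  have h_fin : c * q.toOuterMeasure T ≠ ∞ :=
    mul_ne_top hc (ne_top_of_le_ne_top one_ne_top (q.toOuterMeasure_le_one T))
  refine ENNReal.le_of_add_le_add_right h_fin ?_
  calc ∑' a, (p a - c * q a) + c * q.toOuterMeasure T = p.toOuterMeasure T := by
        rw [← h_mass, ← ENNReal.tsum_add, toOuterMeasure_apply]
        exact tsum_congr h_split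
    _ ≤ c * q.toOuterMeasure T + δ := h T
    _ = δ + c * q.toOuterMeasure T := add_comm _ _

theorem tsum_mul_le (h : ApproxDominated c δ p q) (hc : c ≠ ∞) {f : α → ℝ≥0∞}
    (hf : ∀ a, f a ≤ 1) : ∑' a, p a * f a ≤ c * ∑' a, q a * f a + δ := by
  have h_pointwise : ∀ a, p a * f a ≤ (p a - c * q a) + c * (q a * f a) := fun a =>
    calc p a * f a ≤ (p a - c * q a + c * q a) * f a := by gcongr; exact le_tsub_add
      _ ≤ (p a - c * q a) * 1 + c * q a * f a := by rw [add_mul]; gcongr; exact hf a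
      _ = (p a - c * q a) + c * (q a * f a) := by ring
  calc ∑' a, p a * f a ≤ ∑' a, ((p a - c * q a) + c * (q a * f a)) :=
        ENNReal.tsum_le_tsum h_pointwise
    _ = ∑' a, (p a - c * q a) + c * ∑' a, q a * f a := by
        rw [ENNReal.tsum_add, ENNReal.tsum_mul_left]
    _ ≤ δ + c * ∑' a, q a * f a := by gcongr; exact h.tsum_tsub_le hc
    _ = c * ∑' a, q a * f a + δ := add_comm _ _

theorem bind {c₁ c₂ δ₁ δ₂ : ℝ≥0∞} {p₁ p₂ : PMF α} {f₁ f₂ : α → PMF β}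
    (hp : ApproxDominated c₁ δ₁ p₁ p₂) (hc₁ : c₁ ≠ ∞)
    (hf : ∀ a, ApproxDominated c₂ δ₂ (f₁ a) (f₂ a)) :
    ApproxDominated (c₁ * c₂) (δ₁ + δ₂) (p₁.bind f₁) (p₂.bind f₂) := by
  intro s
  set g := fun a => (f₁ a).toOuterMeasure s - δ₂
  have hg_le_one : ∀ a, g a ≤ 1 := fun a => tsub_le_self.trans ((f₁ a).toOuterMeasure_le_one s)
  have hg_le : ∀ a, g a ≤ c₂ * (f₂ a).toOuterMeasure s := fun a => tsub_le_iff_right.mpr (hf a s)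
  calc (p₁.bind f₁).toOuterMeasure s = ∑' a, p₁ a * (f₁ a).toOuterMeasure s :=
        toOuterMeasure_bind_apply _ _ _
    _ ≤ ∑' a, p₁ a * (g a + δ₂) := ENNReal.tsum_le_tsum fun a => by gcongr; exact le_tsub_add
    _ = ∑' a, p₁ a * g a + δ₂ := by
        simp only [mul_add, ENNReal.tsum_add, ENNReal.tsum_mul_right, tsum_coe, one_mul]
    _ ≤ c₁ * ∑' a, p₂ a * g a + δ₁ + δ₂ := by gcongr; exact hp.tsum_mul_le hc₁ hg_le_one
    _ ≤ c₁ * ∑' a, p₂ a * (c₂ * (f₂ a).toOuterMeasure s) + δ₁ + δ₂ := by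
        gcongr with a; exact hg_le a
    _ = c₁ * c₂ * (p₂.bind f₂).toOuterMeasure s + (δ₁ + δ₂) := by
        simp only [toOuterMeasure_bind_apply, mul_left_comm _ c₂, ENNReal.tsum_mul_left]
        ring

end ApproxDominated

end PMF

theorem seq_composition_two_general
    {D A B : Type*} (neighbor : D → D → Prop)
    (ε₁ ε₂ δ₁ δ₂ : ℝ)
    (M₁ : D → PMF A) (M₂ : D → PMF B)
    (h₁ : ∀ d₁ d₂, neighbor d₁ d₂ → ∀ S : Set A,
      (M₁ d₁).toOuterMeasure S ≤
        ENNReal.ofReal (Real.exp ε₁) * (M₁ d₂).toOuterMeasure S + ENNReal.ofReal δ₁)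
    (h₂ : ∀ d₁ d₂, neighbor d₁ d₂ → ∀ S : Set B,
      (M₂ d₁).toOuterMeasure S ≤
        ENNReal.ofReal (Real.exp ε₂) * (M₂ d₂).toOuterMeasure S + ENNReal.ofReal δ₂) :
    ∀ d₁ d₂, neighbor d₁ d₂ → ∀ S : Set (A × B),
      ((M₁ d₁).bind (fun a => (M₂ d₁).map (Prod.mk a))).toOuterMeasure S ≤
        ENNReal.ofReal (Real.exp (ε₁ + ε₂)) *
          ((M₁ d₂).bind (fun a => (M₂ d₂).map (Prod.mk a))).toOuterMeasure S +
        (ENNReal.ofReal δ₁ + ENNReal.ofReal δ₂) := by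
  intro d₁ d₂ hd
  rw [Real.exp_add, ENNReal.ofReal_mul (Real.exp_pos ε₁).le]
  exact PMF.ApproxDominated.bind (h₁ d₁ d₂ hd) ofReal_ne_top
    fun a => PMF.ApproxDominated.map (h₂ d₁ d₂ hd) (Prod.mk a)

/-- Sequential composition of two (ε,δ)-differentially private mechanisms. -/
theorem seq_composition_two
    {D A B : Type*} (neighbor : D → D → Prop)
    (ε₁ ε₂ δ₁ δ₂ : ℝ) (hε₁ : 0 ≤ ε₁) (hε₂ : 0 ≤ ε₂) (hδ₁ : 0 ≤ δ₁) (hδ₂ : 0 ≤ δ₂)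
    (M₁ : D → PMF A) (M₂ : D → PMF B)
    (h₁ : ∀ d₁ d₂, neighbor d₁ d₂ → ∀ S : Set A,
      (M₁ d₁).toOuterMeasure S ≤
        ENNReal.ofReal (Real.exp ε₁) * (M₁ d₂).toOuterMeasure S + ENNReal.ofReal δ₁)
    (h₂ : ∀ d₁ d₂, neighbor d₁ d₂ → ∀ S : Set B,
      (M₂ d₁).toOuterMeasure S ≤
        ENNReal.ofReal (Real.exp ε₂) * (M₂ d₂).toOuterMeasure S + ENNReal.ofReal δ₂) :
    ∀ d₁ d₂, neighbor d₁ d₂ → ∀ S : Set (A × B),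
      ((M₁ d₁).bind (fun a => (M₂ d₁).map (Prod.mk a))).toOuterMeasure S ≤
        ENNReal.ofReal (Real.exp (ε₁ + ε₂)) *
          ((M₁ d₂).bind (fun a => (M₂ d₂).map (Prod.mk a))).toOuterMeasure S +
        (ENNReal.ofReal δ₁ + ENNReal.ofReal δ₂) :=
  seq_composition_two_general neighbor ε₁ ε₂ δ₁ δ₂ M₁ M₂ h₁ h₂
end

section
/- Let ε > 0, let δ ∈ (0,1), let Δ be a positive integer, set a = ε/Δ, and let m be an integer satisfying m ≥ Δ + (1/a)·ln(1/((e^a + 1)·δ)) and m ≥ Δ. Let L be the discrete Laplace distribution on ℤ with scale a and center m, and let TLap(c) = L.map (fun η => c + max η 0) be the truncated Laplace mechanism. Then TLap is (ε,δ)-differentially private with respect to counts of sensitivity Δ: for all integers c₁, c₂ with |c₁ − c₂| ≤ Δ and every set O ⊆ ℤ, Pr[TLap(c₁) ∈ O] ≤ e^ε · Pr[TLap(c₂) ∈ O] + δ. -/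
/-!
Once `η ≥ Δ` the truncation is inactive for both counts, and pairing the noise value `η` for `c₁`
with `η + (c₁ - c₂)` for `c₂` produces the same output while changing the Laplace weight by a
factor at most `exp (a |c₁ - c₂|) ≤ exp (a Δ) = exp ε`. Only the noise values `η < Δ` are left
unmatched; their mass is a geometric series with sum `exp (-a (m - Δ)) / (exp a + 1)`, and the
lower bound on `m` makes this at most `δ`.
-/

open Real

theorem PMF.toOuterMeasure_map_le_of_injective_shift {α β : Type*} (μ : PMF α) (f g : α → β)
    {σ : α → α} (hσ : Function.Injective σ) {T : Set α} {K : ENNReal}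
    (hμ : ∀ x ∉ T, μ x ≤ K * μ (σ x)) (hgf : ∀ x ∉ T, g (σ x) = f x) (O : Set β) :
    (μ.map f).toOuterMeasure O ≤ K * (μ.map g).toOuterMeasure O + μ.toOuterMeasure T := by
  rw [PMF.toOuterMeasure_map_apply, PMF.toOuterMeasure_map_apply]
  have hcore : μ.toOuterMeasure (f ⁻¹' O \ T) ≤ K * μ.toOuterMeasure (g ⁻¹' O) := by
    rw [PMF.toOuterMeasure_apply, PMF.toOuterMeasure_apply]
    calc ∑' x, (f ⁻¹' O \ T).indicator μ x ≤ ∑' x, K * (g ⁻¹' O).indicator μ (σ x) := by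
          refine ENNReal.tsum_le_tsum fun x => ?_
          by_cases hx : x ∈ f ⁻¹' O \ T
          · have hσx : σ x ∈ g ⁻¹' O := by simpa [Set.mem_preimage, hgf x hx.2] using hx.1
            rw [Set.indicator_of_mem hx, Set.indicator_of_mem hσx]
            exact hμ x hx.2
          · simp [Set.indicator_of_notMem hx]
      _ = K * ∑' x, (g ⁻¹' O).indicator μ (σ x) := ENNReal.tsum_mul_left
      _ ≤ K * ∑' y, (g ⁻¹' O).indicator μ y :=
          mul_le_mul_right (ENNReal.tsum_comp_le_tsum_of_injective hσ _) K
  calc μ.toOuterMeasure (f ⁻¹' O)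
      ≤ μ.toOuterMeasure (f ⁻¹' O \ T) + μ.toOuterMeasure T :=
        (MeasureTheory.measure_mono (Set.subset_sdiff_union _ T)).trans
          (MeasureTheory.measure_union_le _ _)
    _ ≤ K * μ.toOuterMeasure (g ⁻¹' O) + μ.toOuterMeasure T := by gcongr

theorem PMF.toOuterMeasure_Iio_eq_tsum (μ : PMF ℤ) (t : ℤ) :
    μ.toOuterMeasure (Set.Iio t) = ∑' k : ℕ, μ (t - 1 - k) := by
  have hinj : Function.Injective fun k : ℕ => t - 1 - (k : ℤ) := fun i j h => by
    simp only at h; omega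
  have hsupp : ((Set.Iio t).indicator μ).support ⊆ Set.range fun k : ℕ => t - 1 - (k : ℤ) := by
    intro x hx
    have hxt : x ∈ Set.Iio t := Set.support_indicator_subset hx
    exact ⟨(t - 1 - x).toNat, by simp only [Set.mem_Iio] at hxt ⊢; omega⟩
  rw [PMF.toOuterMeasure_apply, ← hinj.tsum_eq hsupp]
  refine tsum_congr fun k => Set.indicator_of_mem ?_ _
  simp only [Set.mem_Iio]; omega

noncomputable def discreteLaplaceWeight (a : ℝ) (m x : ℤ) : ℝ :=
  (exp a - 1) / (exp a + 1) * exp (-a * |(x : ℝ) - (m : ℝ)|)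

namespace discreteLaplaceWeight

variable {a : ℝ} {m : ℤ}

theorem nonneg (ha : 0 ≤ a) (x : ℤ) : 0 ≤ discreteLaplaceWeight a m x := by
  have : 1 ≤ exp a := one_le_exp ha
  unfold discreteLaplaceWeight; positivity

theorem le_exp_mul_shift (ha : 0 ≤ a) (x k : ℤ) :
    discreteLaplaceWeight a m x ≤ exp (a * |(k : ℝ)|) * discreteLaplaceWeight a m (x + k) := by
  have hp : 0 ≤ (exp a - 1) / (exp a + 1) := by
    have : 1 ≤ exp a := one_le_exp ha
    positivity
  have htri : |((x + k : ℤ) : ℝ) - m| ≤ |(x : ℝ) - m| + |(k : ℝ)| := by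
    push_cast
    simpa [add_sub_right_comm] using abs_add_le ((x : ℝ) - m) k
  unfold discreteLaplaceWeight
  rw [mul_left_comm, ← exp_add]
  gcongr
  nlinarith [mul_le_mul_of_nonneg_left htri ha]

theorem hasSum_Iio (ha : 0 < a) {t : ℤ} (htm : t ≤ m) :
    HasSum (fun k : ℕ => discreteLaplaceWeight a m (t - 1 - k))
      (exp (-a * (m - t)) / (exp a + 1)) := by
  have hr : exp (-a) < 1 := exp_lt_one_iff.mpr (by linarith)
  have hterm : (fun k : ℕ => discreteLaplaceWeight a m (t - 1 - k)) =
      fun k => (exp a - 1) / (exp a + 1) * exp (-a * (m - t + 1)) * exp (-a) ^ k := by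
    funext k
    have hle : ((t - 1 - k : ℤ) : ℝ) - m ≤ 0 := by
      have : (t : ℝ) ≤ m := by exact_mod_cast htm
      push_cast; linarith [(k.cast_nonneg : (0 : ℝ) ≤ k)]
    rw [discreteLaplaceWeight, abs_of_nonpos hle, ← exp_nat_mul, mul_assoc, ← exp_add]
    push_cast; ring_nf
  have hsum : exp (-a * (m - t)) / (exp a + 1) =
      (exp a - 1) / (exp a + 1) * exp (-a * (m - t + 1)) * (1 - exp (-a))⁻¹ := by
    have h1 : exp a - 1 ≠ 0 := (sub_pos.mpr (one_lt_exp_iff.mpr ha)).ne'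
    have : exp (-a * (m - t + 1)) = exp (-a * (m - t)) * exp (-a) := by
      rw [← exp_add]; ring_nf
    rw [this, exp_neg]
    field_simp
  rw [hterm, hsum]
  exact (hasSum_geometric_of_lt_one (exp_nonneg _) hr).mul_left _

theorem toOuterMeasure_Iio_eq {L : PMF ℤ}
    (hL : ∀ x, L x = ENNReal.ofReal (discreteLaplaceWeight a m x)) (ha : 0 < a) {t : ℤ}
    (htm : t ≤ m) :
    L.toOuterMeasure (Set.Iio t) = ENNReal.ofReal (exp (-a * (m - t)) / (exp a + 1)) := by
  have hsum := hasSum_Iio ha htm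
  rw [PMF.toOuterMeasure_Iio_eq_tsum, ← hsum.tsum_eq,
    ENNReal.ofReal_tsum_of_nonneg (fun _ => nonneg ha.le _) hsum.summable]
  exact tsum_congr fun k => hL _

end discreteLaplaceWeight

theorem exp_neg_mul_sub_div_le {a δ t m : ℝ} (ha : 0 < a) (hδ : 0 < δ)
    (hm : m ≥ t + (1 / a) * log (1 / ((exp a + 1) * δ))) :
    exp (-a * (m - t)) / (exp a + 1) ≤ δ := by
  have hE : 0 < exp a + 1 := by positivity
  have hlog : log (1 / ((exp a + 1) * δ)) ≤ a * (m - t) := by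
    have h : log (1 / ((exp a + 1) * δ)) / a ≤ m - t := by
      rw [div_eq_inv_mul, ← one_div]; linarith
    rwa [div_le_iff₀' ha] at h
  rw [div_le_iff₀ hE]
  calc exp (-a * (m - t)) ≤ exp (-log (1 / ((exp a + 1) * δ))) := by gcongr; linarith
    _ = δ * (exp a + 1) := by rw [exp_neg, exp_log (by positivity)]; field_simp

theorem truncatedLaplace_DP_general
    (ε δ : ℝ) (hε : 0 < ε) (hδ0 : 0 < δ)
    (Δ : ℤ) (hΔ : 0 < Δ) (a : ℝ) (ha : a = ε / (Δ : ℝ)) (m : ℤ)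
    (hm1 : (m : ℝ) ≥ (Δ : ℝ) + (1 / a) * Real.log (1 / ((Real.exp a + 1) * δ)))
    (hm2 : m ≥ Δ)
    (L : PMF ℤ)
    (hL : ∀ x : ℤ, L x =
      ENNReal.ofReal ((Real.exp a - 1) / (Real.exp a + 1) *
        Real.exp (-a * |(x : ℝ) - (m : ℝ)|))) :
    ∀ c₁ c₂ : ℤ, |c₁ - c₂| ≤ Δ → ∀ O : Set ℤ,
      (L.map (fun η => c₁ + max η 0)).toOuterMeasure O ≤
        ENNReal.ofReal (Real.exp ε) *
          (L.map (fun η => c₂ + max η 0)).toOuterMeasure O +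
        ENNReal.ofReal δ := by
  intro c₁ c₂ hc O
  have hΔ' : (0 : ℝ) < Δ := by exact_mod_cast hΔ
  have ha0 : 0 < a := by rw [ha]; positivity
  have hshift_cost : a * |((c₁ - c₂ : ℤ) : ℝ)| ≤ ε := by
    have : |((c₁ - c₂ : ℤ) : ℝ)| ≤ Δ := by exact_mod_cast hc
    calc a * |((c₁ - c₂ : ℤ) : ℝ)| ≤ a * Δ := by gcongr
      _ = ε := by rw [ha]; field_simp
  have hratio : ∀ x ∉ Set.Iio Δ, L x ≤ ENNReal.ofReal (exp ε) * L (x + (c₁ - c₂)) := by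
    intro x _
    rw [hL, hL, ← ENNReal.ofReal_mul (exp_nonneg ε)]
    refine ENNReal.ofReal_le_ofReal
      ((discreteLaplaceWeight.le_exp_mul_shift ha0.le x (c₁ - c₂)).trans ?_)
    exact mul_le_mul_of_nonneg_right (exp_le_exp.mpr hshift_cost)
      (discreteLaplaceWeight.nonneg ha0.le _)
  have hshift : ∀ x ∉ Set.Iio Δ, c₂ + max (x + (c₁ - c₂)) 0 = c₁ + max x 0 := by
    intro x hx
    simp only [Set.mem_Iio, not_lt] at hx
    have := abs_le.mp hc
    omega
  have htail : L.toOuterMeasure (Set.Iio Δ) ≤ ENNReal.ofReal δ := by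
    rw [discreteLaplaceWeight.toOuterMeasure_Iio_eq hL ha0 hm2]
    exact ENNReal.ofReal_le_ofReal (exp_neg_mul_sub_div_le ha0 hδ0 hm1)
  exact (L.toOuterMeasure_map_le_of_injective_shift _ _ (add_left_injective (c₁ - c₂))
    hratio hshift O).trans (by gcongr)

/-- The truncated Laplace mechanism is (ε,δ)-differentially private for
counting queries of sensitivity Δ. -/
theorem truncatedLaplace_DP
    (ε δ : ℝ) (hε : 0 < ε) (hδ0 : 0 < δ) (hδ1 : δ < 1)
    (Δ : ℤ) (hΔ : 0 < Δ) (a : ℝ) (ha : a = ε / (Δ : ℝ)) (m : ℤ)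
    (hm1 : (m : ℝ) ≥ (Δ : ℝ) + (1 / a) * Real.log (1 / ((Real.exp a + 1) * δ)))
    (hm2 : m ≥ Δ)
    (L : PMF ℤ)
    (hL : ∀ x : ℤ, L x =
      ENNReal.ofReal ((Real.exp a - 1) / (Real.exp a + 1) *
        Real.exp (-a * |(x : ℝ) - (m : ℝ)|))) :
    ∀ c₁ c₂ : ℤ, |c₁ - c₂| ≤ Δ → ∀ O : Set ℤ,
      (L.map (fun η => c₁ + max η 0)).toOuterMeasure O ≤
        ENNReal.ofReal (Real.exp ε) *
          (L.map (fun η => c₂ + max η 0)).toOuterMeasure O +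
        ENNReal.ofReal δ :=
  truncatedLaplace_DP_general ε δ hε hδ0 Δ hΔ a ha m hm1 hm2 L hL
end

section
/- Let ε > 0, let δ ∈ (0,1), let Δ be a positive integer, set a = ε/Δ, and let m be an integer satisfying m ≥ Δ and m ≥ Δ + (1/a)·ln(1/((e^a + 1)·δ)). Let L be the discrete Laplace distribution on ℤ with scale a and center m. Then the probability that the noise falls below the sensitivity is at most δ: Pr_{η ~ L}[η < Δ] ≤ δ. -/
/-!
Below the center the mass function is geometric with ratio `e^{-a}`, so the left tail
`Pr[η < t]` for `t ≤ m` sums in closed form to `e^{-a(m - t)} / (e^a + 1)`. The condition on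
`m` is exactly what makes this at most `δ`.
-/

open Real

noncomputable def discreteLaplaceMass (a : ℝ) (m x : ℤ) : ℝ :=
  (exp a - 1) / (exp a + 1) * exp (-a * |(x : ℝ) - (m : ℝ)|)

theorem tsum_indicator_lt_int {M : Type*} [AddCommMonoid M] [TopologicalSpace M]
    (f : ℤ → M) (t : ℤ) :
    ∑' x, {x : ℤ | x < t}.indicator f x = ∑' k : ℕ, f (t - 1 - k) := by
  have hinj : Function.Injective (fun k : ℕ => t - 1 - (k : ℤ)) := fun k l h => by
    simpa using h
  have hsupp : Function.support ({x : ℤ | x < t}.indicator f) ⊆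
      Set.range (fun k : ℕ => t - 1 - (k : ℤ)) := fun x hx =>
    ⟨(t - 1 - x).toNat, by
      have : x ∈ {x : ℤ | x < t} := Set.mem_of_indicator_ne_zero hx
      simp only [Set.mem_ofPred_eq] at this ⊢
      omega⟩
  rw [← hinj.tsum_eq hsupp]
  refine tsum_congr fun k => Set.indicator_of_mem ?_ f
  simp only [Set.mem_ofPred_eq]
  omega

theorem hasSum_exp_neg_mul_add_nat {a : ℝ} (ha : 0 < a) (s : ℝ) :
    HasSum (fun k : ℕ => exp (-a * (s + k))) (exp (-a * s) / (1 - exp (-a))) := by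
  have hr : exp (-a) < 1 := exp_lt_one_iff.2 (by linarith)
  have hterm : ∀ k : ℕ, exp (-a * (s + k)) = exp (-a * s) * exp (-a) ^ k := fun k => by
    rw [← exp_nat_mul, ← exp_add]; ring_nf
  simp_rw [hterm, div_eq_mul_inv]
  exact (hasSum_geometric_of_lt_one (exp_pos _).le hr).mul_left _

theorem hasSum_discreteLaplaceMass_lt {a : ℝ} (ha : 0 < a) {m t : ℤ} (htm : t ≤ m) :
    HasSum (fun k : ℕ => discreteLaplaceMass a m (t - 1 - k))
      (exp (-a * (m - t)) / (exp a + 1)) := by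
  have hdist : ∀ k : ℕ, |((t - 1 - k : ℤ) : ℝ) - m| = (m - t + 1 : ℝ) + k := fun k => by
    rw [abs_of_nonpos (by push_cast; linarith [(Int.cast_le (R := ℝ)).2 htm, (k.cast_nonneg : (0 : ℝ) ≤ k)])]
    push_cast; ring
  have hsum : (exp a - 1) / (exp a + 1) * (exp (-a * (m - t + 1)) / (1 - exp (-a)))
      = exp (-a * (m - t)) / (exp a + 1) := by
    have hexp : exp (-a * (m - t + 1)) = exp (-a * (m - t)) * exp (-a) := by
      rw [← exp_add]; ring_nf
    have hea : 1 < exp a := one_lt_exp_iff.2 ha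
    rw [hexp, exp_neg]
    field_simp [(by linarith : exp a - 1 ≠ 0)]
  simp_rw [discreteLaplaceMass, hdist, ← hsum]
  exact (hasSum_exp_neg_mul_add_nat ha _).mul_left _

theorem PMF.toOuterMeasure_lt_eq_of_discreteLaplace {a : ℝ} (ha : 0 < a) {m t : ℤ} (htm : t ≤ m)
    (L : PMF ℤ) (hL : ∀ x, L x = ENNReal.ofReal (discreteLaplaceMass a m x)) :
    L.toOuterMeasure {η : ℤ | η < t} = ENNReal.ofReal (exp (-a * (m - t)) / (exp a + 1)) := by
  have hmass := hasSum_discreteLaplaceMass_lt ha htm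
  have hnonneg : ∀ k : ℕ, 0 ≤ discreteLaplaceMass a m (t - 1 - k) := fun k =>
    mul_nonneg (div_nonneg (by linarith [add_one_le_exp a]) (by positivity)) (exp_pos _).le
  rw [PMF.toOuterMeasure_apply, tsum_indicator_lt_int, ← hmass.tsum_eq,
    ENNReal.ofReal_tsum_of_nonneg hnonneg hmass.summable]
  exact tsum_congr fun k => hL _

theorem exp_neg_mul_le_of_inv_mul_log_inv_le {a c x : ℝ} (ha : 0 < a) (hc : 0 < c)
    (hx : 1 / a * log (1 / c) ≤ x) : exp (-a * x) ≤ c := by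
  have hlog : -log c ≤ a * x := by
    rw [one_div c, log_inv, one_div, inv_mul_le_iff₀ ha] at hx
    exact hx
  calc exp (-a * x) ≤ exp (log c) := exp_le_exp.2 (by linarith)
    _ = c := exp_log hc

theorem discreteLaplace_below_sensitivity_general
    (ε δ : ℝ) (hε : 0 < ε) (hδ0 : 0 < δ)
    (Δ : ℤ) (hΔ : 0 < Δ) (a : ℝ) (ha : a = ε / (Δ : ℝ)) (m : ℤ)
    (hm2 : m ≥ Δ)
    (hm1 : (m : ℝ) ≥ (Δ : ℝ) + (1 / a) * Real.log (1 / ((Real.exp a + 1) * δ)))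
    (L : PMF ℤ)
    (hL : ∀ x : ℤ, L x =
      ENNReal.ofReal ((Real.exp a - 1) / (Real.exp a + 1) *
        Real.exp (-a * |(x : ℝ) - (m : ℝ)|))) :
    L.toOuterMeasure {η : ℤ | η < Δ} ≤ ENNReal.ofReal δ := by
  have ha0 : 0 < a := ha ▸ div_pos hε (Int.cast_pos.2 hΔ)
  rw [PMF.toOuterMeasure_lt_eq_of_discreteLaplace ha0 hm2 L hL]
  refine ENNReal.ofReal_le_ofReal ?_
  rw [div_le_iff₀ (by positivity), mul_comm δ]
  exact exp_neg_mul_le_of_inv_mul_log_inv_le ha0 (by positivity) (by linarith)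

/-- With the stated choice of center `m`, the probability that a discrete
Laplace noise variable falls below the sensitivity `Δ` is at most `δ`. -/
theorem discreteLaplace_below_sensitivity
    (ε δ : ℝ) (hε : 0 < ε) (hδ0 : 0 < δ) (hδ1 : δ < 1)
    (Δ : ℤ) (hΔ : 0 < Δ) (a : ℝ) (ha : a = ε / (Δ : ℝ)) (m : ℤ)
    (hm2 : m ≥ Δ)
    (hm1 : (m : ℝ) ≥ (Δ : ℝ) + (1 / a) * Real.log (1 / ((Real.exp a + 1) * δ)))
    (L : PMF ℤ)
    (hL : ∀ x : ℤ, L x =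
      ENNReal.ofReal ((Real.exp a - 1) / (Real.exp a + 1) *
        Real.exp (-a * |(x : ℝ) - (m : ℝ)|))) :
    L.toOuterMeasure {η : ℤ | η < Δ} ≤ ENNReal.ofReal δ :=
  discreteLaplace_below_sensitivity_general ε δ hε hδ0 Δ hΔ a ha m hm2 hm1 L hL
end

section
/- Let ε > 0, let Δ be a positive integer, set a = ε/Δ, let m be an integer with m ≥ Δ, let L be the discrete Laplace distribution on ℤ with scale a and center m, and let TLap(c) = L.map (fun η => c + max η 0). Then for all integers c₁, c₂ and every integer o with o > c₁, o > c₂, and |c₁ − c₂| ≤ Δ, the output probabilities at o satisfy e^{−ε} · Pr[TLap(c₂) = o] ≤ Pr[TLap(c₁) = o] ≤ e^{ε} · Pr[TLap(c₂) = o]. -/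
/-- For outputs strictly above both true counts, the truncated Laplace mechanism's
point output probabilities on neighboring counts are within a factor `e^ε`. -/
theorem truncatedLaplace_pointwise_DP
    (ε : ℝ) (hε : 0 < ε) (Δ : ℤ) (hΔ : 0 < Δ) (a : ℝ) (ha : a = ε / (Δ : ℝ))
    (m : ℤ) (hm : m ≥ Δ)
    (L : PMF ℤ)
    (hL : ∀ x : ℤ, L x =
      ENNReal.ofReal ((Real.exp a - 1) / (Real.exp a + 1) *
        Real.exp (-a * |(x : ℝ) - (m : ℝ)|))) :
    ∀ c₁ c₂ o : ℤ, c₁ < o → c₂ < o → |c₁ - c₂| ≤ Δ →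
      ENNReal.ofReal (Real.exp (-ε)) * (L.map (fun η => c₂ + max η 0)) o ≤
          (L.map (fun η => c₁ + max η 0)) o ∧
      (L.map (fun η => c₁ + max η 0)) o ≤
          ENNReal.ofReal (Real.exp ε) * (L.map (fun η => c₂ + max η 0)) o := by
  intro c₁ c₂ o h1 h2 hd
  have key : ∀ c : ℤ, c < o → (L.map (fun η => c + max η 0)) o = L (o - c) := by
    intro c hc
    rw [PMF.map_apply]
    rw [tsum_eq_single (o - c)]
    · rw [if_pos]
      rw [max_eq_left (by omega : (0:ℤ) ≤ o - c)]
      omega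
    · intro b hb
      rw [if_neg]
      intro h
      rcases le_or_gt b 0 with hb0 | hb0
      · rw [max_eq_right hb0] at h; omega
      · rw [max_eq_left hb0.le] at h; omega
  rw [key c₁ h1, key c₂ h2, hL, hL]
  have hΔ' : (0:ℝ) < (Δ:ℝ) := by exact_mod_cast hΔ
  have ha0 : 0 < a := by rw [ha]; positivity
  have haΔ : a * (Δ:ℝ) = ε := by rw [ha]; field_simp
  set p := (Real.exp a - 1) / (Real.exp a + 1) with hp
  have hp0 : 0 ≤ p := by
    apply div_nonneg
    · nlinarith [Real.exp_pos a, Real.add_one_le_exp a]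
    · positivity
  set X₁ := |((o - c₁ : ℤ) : ℝ) - (m:ℝ)| with hX1
  set X₂ := |((o - c₂ : ℤ) : ℝ) - (m:ℝ)| with hX2
  have hdr : |X₁ - X₂| ≤ (Δ:ℝ) := by
    have h := abs_abs_sub_abs_le_abs_sub (((o - c₁ : ℤ) : ℝ) - (m:ℝ))
      (((o - c₂ : ℤ) : ℝ) - (m:ℝ))
    have he : (((o - c₁ : ℤ) : ℝ) - (m:ℝ)) - (((o - c₂ : ℤ) : ℝ) - (m:ℝ)) = ((c₂ - c₁ : ℤ) : ℝ) := by
      push_cast; ring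
    rw [he] at h
    have : |((c₂ - c₁ : ℤ) : ℝ)| ≤ (Δ:ℝ) := by
      rw [← Int.cast_abs, abs_sub_comm]; exact_mod_cast hd
    linarith
  have habs := abs_le.mp hdr
  constructor
  · rw [← ENNReal.ofReal_mul (Real.exp_pos _).le]
    apply ENNReal.ofReal_le_ofReal
    rw [mul_comm (Real.exp (-ε)), mul_assoc, ← Real.exp_add]
    apply mul_le_mul_of_nonneg_left _ hp0
    apply Real.exp_le_exp.mpr
    nlinarith
  · rw [← ENNReal.ofReal_mul (Real.exp_pos _).le]
    apply ENNReal.ofReal_le_ofReal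
    rw [mul_comm (Real.exp ε), mul_assoc, ← Real.exp_add]
    apply mul_le_mul_of_nonneg_left _ hp0
    apply Real.exp_le_exp.mpr
    nlinarith
end

section
/- Let ε > 0, let Δ be a positive integer, set a = ε/Δ, let m be an integer with m ≥ Δ, let L be the discrete Laplace distribution on ℤ with scale a and center m, and let TLap(c) = L.map (fun η => c + max η 0). Then for all integers c₁ ≤ c₂ with c₂ − c₁ ≤ Δ, the probability that mechanism run on c₁ outputs exactly c₂ is bounded by the probability that the mechanism run on c₂ outputs c₂ up to a factor e^ε: Pr[TLap(c₁) = c₂] ≤ e^{ε} · Pr[TLap(c₂) = c₂]. -/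
/-- The probability that the truncated Laplace mechanism run on `c₁` outputs
exactly `c₂` is at most `e^ε` times the probability that the mechanism run on
`c₂` outputs `c₂`, whenever `c₁ ≤ c₂ ≤ c₁ + Δ`. -/
theorem truncatedLaplace_boundary_point
    (ε : ℝ) (hε : 0 < ε) (Δ : ℤ) (hΔ : 0 < Δ) (a : ℝ) (ha : a = ε / (Δ : ℝ))
    (m : ℤ) (hm : m ≥ Δ)
    (L : PMF ℤ)
    (hL : ∀ x : ℤ, L x =
      ENNReal.ofReal ((Real.exp a - 1) / (Real.exp a + 1) *
        Real.exp (-a * |(x : ℝ) - (m : ℝ)|))) :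
    ∀ c₁ c₂ : ℤ, c₁ ≤ c₂ → c₂ - c₁ ≤ Δ →
      (L.map (fun η => c₁ + max η 0)) c₂ ≤
        ENNReal.ofReal (Real.exp ε) * (L.map (fun η => c₂ + max η 0)) c₂ := by
  intro c₁ c₂ hle hdiff
  have hone : (1 : ENNReal) ≤ ENNReal.ofReal (Real.exp ε) := by
    rw [ENNReal.one_le_ofReal]
    exact Real.one_le_exp hε.le
  rcases eq_or_lt_of_le hle with heq | hlt
  · subst heq
    calc (L.map (fun η => c₁ + max η 0)) c₁
        = 1 * (L.map (fun η => c₁ + max η 0)) c₁ := (one_mul _).symm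
      _ ≤ ENNReal.ofReal (Real.exp ε) * (L.map (fun η => c₁ + max η 0)) c₁ :=
          mul_le_mul_left hone _
  · have ha0 : 0 < a := by
      rw [ha]
      apply div_pos hε
      exact_mod_cast hΔ
    have hLHS : (L.map (fun η => c₁ + max η 0)) c₂ = L (c₂ - c₁) := by
      rw [PMF.map_apply]
      rw [tsum_eq_single (c₂ - c₁)]
      · rw [if_pos]
        rw [max_eq_left (by omega : (0:ℤ) ≤ c₂ - c₁)]
        omega
      · intro b hb
        rw [if_neg]
        intro h
        rcases le_total b 0 with hb0 | hb0
        · rw [max_eq_right hb0] at h; omega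
        · rw [max_eq_left hb0] at h; omega
    have hRHS : L 0 ≤ (L.map (fun η => c₂ + max η 0)) c₂ := by
      rw [PMF.map_apply]
      have := ENNReal.le_tsum (f := fun b => if c₂ = c₂ + max b 0 then L b else 0) 0
      simpa using this
    rw [hLHS]
    refine le_trans ?_ (mul_le_mul_right hRHS _)
    rw [hL, hL]
    have hp : 0 ≤ (Real.exp a - 1) / (Real.exp a + 1) := by
      apply div_nonneg
      · nlinarith [Real.one_le_exp ha0.le]
      · nlinarith [Real.exp_pos a]
    have habs1 : |((c₂ - c₁ : ℤ) : ℝ) - (m : ℝ)| = (m : ℝ) - ((c₂ - c₁ : ℤ) : ℝ) := by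
      rw [abs_of_nonpos]
      · ring
      · push_cast
        have : ((c₂ : ℝ) - c₁) ≤ (Δ : ℝ) := by exact_mod_cast hdiff
        have : ((Δ : ℝ)) ≤ (m : ℝ) := by exact_mod_cast hm
        push_cast at *
        linarith
    have habs0 : |((0 : ℤ) : ℝ) - (m : ℝ)| = (m : ℝ) := by
      rw [abs_of_nonpos]
      · push_cast; ring
      · have : (0:ℝ) ≤ (m : ℝ) := by exact_mod_cast (by omega : (0:ℤ) ≤ m)
        push_cast
        linarith
    rw [habs1, habs0]
    rw [← ENNReal.ofReal_mul (Real.exp_pos ε).le]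
    apply ENNReal.ofReal_le_ofReal
    have hexp : Real.exp (-a * ((m : ℝ) - ((c₂ - c₁ : ℤ) : ℝ))) ≤
        Real.exp ε * Real.exp (-a * (m : ℝ)) := by
      rw [← Real.exp_add]
      apply Real.exp_le_exp.mpr
      have hεa : ε = a * (Δ : ℝ) := by
        rw [ha]
        field_simp
      have hd : ((c₂ - c₁ : ℤ) : ℝ) ≤ (Δ : ℝ) := by exact_mod_cast hdiff
      nlinarith [mul_le_mul_of_nonneg_left hd ha0.le]
    nlinarith [Real.exp_pos (-a * ((m : ℝ) - ((c₂ - c₁ : ℤ) : ℝ))),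
      mul_le_mul_of_nonneg_left hexp hp]
end

section
/- Let B be a fixed multiset over β, let kA : α → κ and kB : β → κ be key functions with decidable equality on κ, and define the equi-join of a multiset A over α with B by J(A) = A.bind (fun a => (B.filter (fun b => kB b = kA a)).map (fun b => (a, b))). Suppose m ∈ ℕ bounds the multiplicity of every join key in B, i.e., for every a : α, card(B.filter (fun b => kB b = kA a)) ≤ m. Then adding a single record to the input changes the join output by at most m in symmetric difference: for every multiset A over α and every a : α, d(J(a ::ₘ A), J(A)) ≤ m. -/
/-- Equi-join of a multiset `A` (over `α`) with a fixed multiset `B` (over `β`)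
on key functions `kA`, `kB`. -/
def equiJoin {α β κ : Type*} [DecidableEq κ]
    (kA : α → κ) (kB : β → κ) (B : Multiset β) (A : Multiset α) :
    Multiset (α × β) :=
  A.bind (fun a => (B.filter (fun b => kB b = kA a)).map (fun b => (a, b)))

/-- If every join key of `B` has multiplicity at most `m`, then adding a single
record to `A` changes the equi-join output by at most `m` in symmetric
difference, i.e. the join operator is `m`-stable for single-record additions. -/
theorem equiJoin_add_one_stability
    {α β κ : Type*} [DecidableEq α] [DecidableEq β] [DecidableEq κ]
    (kA : α → κ) (kB : β → κ) (B : Multiset β) (m : ℕ)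
    (hm : ∀ a : α, Multiset.card (B.filter (fun b => kB b = kA a)) ≤ m) :
    ∀ (A : Multiset α) (a : α),
      Multiset.card
        (equiJoin kA kB B (a ::ₘ A) - equiJoin kA kB B A +
          (equiJoin kA kB B A - equiJoin kA kB B (a ::ₘ A))) ≤ m := by
  intro A a
  have hcons : equiJoin kA kB B (a ::ₘ A)
      = (B.filter (fun b => kB b = kA a)).map (fun b => (a, b)) + equiJoin kA kB B A := by
    simp [equiJoin, Multiset.cons_bind]
  rw [hcons]
  rw [add_tsub_cancel_right]
  rw [tsub_eq_zero_of_le (Multiset.le_add_left _ _)]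
  simpa using hm a
end
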